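/- Lovász's bound: for any finite graph G and n ≥ 1, χ(G^n) ≤ χ_f(G)^n · (1 + n · ln α(G)) where α(G) is the independence number and G^n is the n-th OR-power (assuming α(G) ≥ 2, or with the bound 1 + n·ln|V(G)| in general). -/

import Mathlib

def IsBFoldColoring {V : Type*} (G : SimpleGraph V) (a b : ℕ)
    (c : V → Finset (Fin a)) : Prop :=
  (∀ v, (c v).card = b) ∧ ∀ v w, G.Adj v w → Disjoint (c v) (c w)

def HasFoldColoring {V : Type*} (G : SimpleGraph V) (a b : ℕ) : Prop :=
  ∃ c : V → Finset (Fin a), IsBFoldColoring G a b c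

/-- The `b`-fold chromatic number `χ_b(G)`. -/
noncomputable def foldChromatic {V : Type*} (G : SimpleGraph V) (b : ℕ) : ℕ :=
  sInf {a | HasFoldColoring G a b}

/-- The fractional chromatic number `χ_f(G) = inf_b χ_b(G)/b`. -/
noncomputable def fracChromatic {V : Type*} (G : SimpleGraph V) : ℝ :=
  ⨅ b : ℕ+, (foldChromatic G (b : ℕ) : ℝ) / ((b : ℕ) : ℝ)
/-- The n-th OR-power of a simple graph: tuples are adjacent iff at least one
coordinate pair is adjacent. -/
def orPow {V : Type*} (G : SimpleGraph V) (n : ℕ) : SimpleGraph (Fin n → V) where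
  Adj x y := ∃ i, G.Adj (x i) (y i)
  symm := by
    constructor
    intro x y ⟨i, h⟩
    exact ⟨i, h.symm⟩
  loopless := by
    constructor
    intro x ⟨i, h⟩
    exact G.irrefl h
/-- The independence number `α(G)`. -/
noncomputable def indepNum {V : Type*} [Fintype V] (G : SimpleGraph V) : ℕ :=
  sSup {n | ∃ s : Finset V, (∀ v ∈ s, ∀ w ∈ s, v ≠ w → ¬ G.Adj v w) ∧ s.card = n}


section LovaszAux
open Finset

/-- helper log bound: `1 - 1/x ≤ log x` for `x > 0`. -/
lemma aux_log_ge {x : ℝ} (hx : 0 < x) : 1 - 1/x ≤ Real.log x := by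
  have h := Real.log_le_sub_one_of_pos (show (0:ℝ) < 1/x by positivity)
  rw [Real.log_div one_ne_zero (ne_of_gt hx), Real.log_one] at h
  linarith

/-- The potential function for the greedy argument. -/
noncomputable def Bfun (k m : ℝ) : ℝ := min m k + k * Real.log (max m k / k)

lemma Bfun_of_le {k m : ℝ} (hk : 0 < k) (h : m ≤ k) : Bfun k m = m := by
  rw [Bfun, min_eq_left h, max_eq_right h, div_self (ne_of_gt hk), Real.log_one, mul_zero, add_zero]

lemma Bfun_of_ge {k m : ℝ} (h : k ≤ m) : Bfun k m = k + k * Real.log (m / k) := by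
  rw [Bfun, min_eq_right h, max_eq_left h]

lemma Bfun_step {k : ℝ} {m m' : ℕ} (hk : 1 ≤ k) (hm : 1 ≤ m)
    (hle : (m' : ℝ) ≤ (m : ℝ) - (m : ℝ) / k) : Bfun k m' + 1 ≤ Bfun k m := by
  have hk0 : 0 < k := by linarith
  have hM1 : (1:ℝ) ≤ (m:ℝ) := by exact_mod_cast hm
  have hM0 : (0:ℝ) < (m:ℝ) := by linarith
  rcases Nat.eq_zero_or_pos m' with h0 | h1
  · -- m' = 0 : need 1 ≤ Bfun k m
    subst h0
    have hB0 : Bfun k 0 = 0 := by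
      rw [Bfun_of_le hk0 (by linarith)]
    rw [Nat.cast_zero, hB0, zero_add]
    rcases le_total (m:ℝ) k with h | h
    · rw [Bfun_of_le hk0 h]; exact hM1
    · rw [Bfun_of_ge h]
      have : 0 ≤ Real.log ((m:ℝ)/k) := Real.log_nonneg (by rw [le_div_iff₀ hk0]; linarith)
      nlinarith
  · -- m' ≥ 1
    have hM'1 : (1:ℝ) ≤ (m':ℝ) := by exact_mod_cast h1
    have hMk : (m:ℝ)/k ≤ (m:ℝ) - 1 := by linarith
    have hM2 : (1:ℝ) < (m:ℝ) := by
      by_contra hcon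
      push_neg at hcon
      have : (m:ℝ) = 1 := le_antisymm hcon hM1
      rw [this] at hle
      have : 1/k > 0 := by positivity
      linarith
    have hk1 : 1 < k := by
      -- from m/k ≤ m - 1 and m > 1
      rw [div_le_iff₀ hk0] at hMk
      nlinarith
    have hM'M : (m':ℝ) < (m:ℝ) := by
      have : (m:ℝ)/k > 0 := by positivity
      linarith
    rcases le_total (m:ℝ) k with hcase | hcase
    · -- m ≤ k : both linear; use integrality
      have h1' : (m':ℝ) ≤ k := by linarith
      rw [Bfun_of_le hk0 h1', Bfun_of_le hk0 hcase]
      have : m' < m := by exact_mod_cast hM'M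
      have : m' + 1 ≤ m := this
      exact_mod_cast this
    · -- k ≤ m
      rw [Bfun_of_ge hcase]
      rcases le_total k (m':ℝ) with hcase2 | hcase2
      · -- k ≤ m' : log regime
        rw [Bfun_of_ge hcase2]
        have hM'0 : (0:ℝ) < (m':ℝ) := by linarith
        have hlog : Real.log ((m:ℝ)/k) - Real.log ((m':ℝ)/k) = Real.log ((m:ℝ)/(m':ℝ)) := by
          rw [← Real.log_div (by positivity) (by positivity)]
          congr 1
          field_simp
        have hlb : 1 - (m':ℝ)/(m:ℝ) ≤ Real.log ((m:ℝ)/(m':ℝ)) := by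
          have := aux_log_ge (show (0:ℝ) < (m:ℝ)/(m':ℝ) by positivity)
          rw [one_div_div] at this
          exact this
        have hkey : 1 ≤ k * Real.log ((m:ℝ)/(m':ℝ)) := by
          have e1 : k * ((m:ℝ)/k) = (m:ℝ) := by field_simp
          have e2 : k * (1 - (m':ℝ)/(m:ℝ)) * (m:ℝ) = k * (m:ℝ) - k * (m':ℝ) := by
            field_simp
          have e3 : k * (m':ℝ) ≤ k * (m:ℝ) - (m:ℝ) := by
            nlinarith [mul_le_mul_of_nonneg_left hle (le_of_lt hk0), e1]
          have e4 : 1 ≤ k * (1 - (m':ℝ)/(m:ℝ)) := by nlinarith [e2, e3, hM0]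
          nlinarith [mul_le_mul_of_nonneg_left hlb (le_of_lt hk0)]
        nlinarith [hlog, hkey]
      · -- m' ≤ k ≤ m : mixed regime
        rw [Bfun_of_le hk0 hcase2]
        have hlog : 1 - k/(m:ℝ) ≤ Real.log ((m:ℝ)/k) := by
          have := aux_log_ge (show (0:ℝ) < (m:ℝ)/k by positivity)
          rw [one_div_div] at this
          exact this
        rcases le_total ((m:ℝ) * (k - 1)) (k * k) with hq | hq
        · -- quadratic regime: m' ≤ m - m/k suffices
          have hgoal : (m:ℝ) - (m:ℝ)/k + 1 ≤ 2*k - k*k/(m:ℝ) := by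
            rw [div_le_iff₀ hk0] at hMk
            have hfact : ((m:ℝ) - k) * (k*k - (m:ℝ)*(k-1)) ≥ 0 :=
              mul_nonneg (by linarith) (by linarith)
            rw [← sub_nonneg]
            have : 2*k - k*k/(m:ℝ) - ((m:ℝ) - (m:ℝ)/k + 1) =
                (((m:ℝ) - k) * (k*k - (m:ℝ)*(k-1))) / ((m:ℝ)*k) := by
              field_simp; ring
            rw [this]
            exact div_nonneg hfact (by positivity)
          have h5 : k * (1 - k/(m:ℝ)) ≤ k * Real.log ((m:ℝ)/k) :=
            mul_le_mul_of_nonneg_left hlog (le_of_lt hk0)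
          have h6 : k * (1 - k/(m:ℝ)) = k - k*k/(m:ℝ) := by ring
          linarith
        · -- large m: k * log(m/k) ≥ 1
          have h2 : k/(m:ℝ) ≤ (k-1)/k := by
            rw [div_le_div_iff₀ hM0 hk0]
            nlinarith
          have : 1 ≤ k * Real.log ((m:ℝ)/k) := by
            have h3 : 1 - (k-1)/k ≤ Real.log ((m:ℝ)/k) := by linarith
            have h4 : 1 - (k-1)/k = 1/k := by field_simp; ring
            rw [h4] at h3
            have := mul_le_mul_of_nonneg_left h3 (le_of_lt hk0)
            rw [mul_one_div, div_self (ne_of_gt hk0)] at this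
            linarith
          linarith

lemma Bfun_le {k M N : ℝ} (hk : 1 ≤ k) (hM : 1 ≤ M) (hN0 : 0 ≤ N) (hN : N ≤ k * M) :
    Bfun k N ≤ k * (1 + Real.log M) := by
  have hk0 : 0 < k := by linarith
  have hlogM : 0 ≤ Real.log M := Real.log_nonneg hM
  rcases le_total N k with h | h
  · rw [Bfun_of_le hk0 h]
    nlinarith
  · rw [Bfun_of_ge h]
    have h1 : N / k ≤ M := by rw [div_le_iff₀ hk0]; linarith
    have h2 : Real.log (N/k) ≤ Real.log M := Real.log_le_log (div_pos (lt_of_lt_of_le hk0 h) hk0) h1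
    nlinarith

lemma Bfun_zero {k : ℝ} (hk : 1 ≤ k) : Bfun k 0 = 0 := by
  have hk0 : (0:ℝ) < k := by linarith
  rw [Bfun_of_le hk0 (by linarith)]

open Finset

section Greedy
variable {W : Type*} [Fintype W] (H : SimpleGraph W)

/-- double counting -/
lemma sum_classes {A B : ℕ} (c : W → Finset (Fin A)) (hc1 : ∀ v, (c v).card = B)
    (s : Finset W) :
    ∑ j : Fin A, (s.filter (fun v => j ∈ c v)).card = B * s.card := by
  classical
  simp only [Finset.card_filter]
  rw [Finset.sum_comm]
  have : ∀ v ∈ s, (∑ j : Fin A, if j ∈ c v then 1 else 0) = B := by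
    intro v _
    rw [← Finset.card_filter, Finset.filter_univ_mem, hc1 v]
  rw [Finset.sum_congr rfl this, Finset.sum_const, smul_eq_mul, mul_comm]

lemma greedy [Nonempty W] {A B : ℕ} (hB : 1 ≤ B) (c : W → Finset (Fin A))
    (hc : IsBFoldColoring H A B c) (s : Finset W) :
    ∃ (t : ℕ) (f : W → ℕ), (∀ v ∈ s, f v < t) ∧
      (∀ v ∈ s, ∀ w ∈ s, H.Adj v w → f v ≠ f w) ∧
      (t : ℝ) ≤ Bfun ((A : ℝ)/(B : ℝ)) s.card := by
  classical
  have hBA : B ≤ A := by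
    obtain ⟨v⟩ := ‹Nonempty W›
    calc B = (c v).card := (hc.1 v).symm
    _ ≤ Fintype.card (Fin A) := Finset.card_le_univ _
    _ = A := Fintype.card_fin A
  have hB0 : (0:ℝ) < (B:ℝ) := by exact_mod_cast hB
  have hk : (1:ℝ) ≤ (A:ℝ)/(B:ℝ) := by
    rw [le_div_iff₀ hB0, one_mul]; exact_mod_cast hBA
  have hA0 : (0:ℝ) < (A:ℝ) := by
    have : (1:ℕ) ≤ A := le_trans hB hBA
    exact_mod_cast this
  induction s using Finset.strongInduction with
  | _ s ih =>
    rcases Finset.eq_empty_or_nonempty s with rfl | hs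
    · exact ⟨0, fun _ => 0, by simp, by simp, by
        rw [Finset.card_empty, Nat.cast_zero, Bfun_zero hk]⟩
    · have hm : 1 ≤ s.card := Finset.Nonempty.card_pos hs
      have hAfin : (Finset.univ : Finset (Fin A)).Nonempty := by
        rw [Finset.univ_nonempty_iff]
        exact Fin.pos_iff_nonempty.mp (lt_of_lt_of_le Nat.one_pos (le_trans hB hBA))
      obtain ⟨j, -, hj⟩ := Finset.exists_max_image Finset.univ
        (fun j => (s.filter (fun v => j ∈ c v)).card) hAfin
      set I := s.filter (fun v => j ∈ c v) with hI
      have hBm : B * s.card ≤ A * I.card := by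
        calc B * s.card = ∑ j : Fin A, (s.filter (fun v => j ∈ c v)).card :=
              (sum_classes c hc.1 s).symm
        _ ≤ (Finset.univ : Finset (Fin A)).card • I.card :=
              Finset.sum_le_card_nsmul _ _ _ (fun x _ => hj x (Finset.mem_univ x))
        _ = A * I.card := by rw [smul_eq_mul, Finset.card_univ, Fintype.card_fin]
      have hIpos : 0 < I.card := by
        by_contra h
        push_neg at h
        interval_cases hIc : I.card
        · have : B * s.card = 0 := Nat.le_zero.mp (by simpa using hBm)
          have := Nat.mul_pos hB hm
          omega
      have hIs : I ⊆ s := Finset.filter_subset _ _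
      set s' := s \ I with hs'
      have hss : s' ⊂ s := by
        apply Finset.sdiff_ssubset hIs
        exact Finset.card_pos.mp hIpos
      obtain ⟨t', f', hf1, hf2, hf3⟩ := ih s' hss
      refine ⟨t' + 1, fun v => if v ∈ I then t' else f' v, ?_, ?_, ?_⟩
      · intro v hv
        by_cases hvI : v ∈ I
        · simp [hvI]
        · simp only [hvI, if_neg, ite_false]
          exact Nat.lt_succ_of_lt (hf1 v (Finset.mem_sdiff.mpr ⟨hv, hvI⟩))
      · intro v hv w hw hadj
        by_cases hvI : v ∈ I <;> by_cases hwI : w ∈ I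
        · exfalso
          have hjv : j ∈ c v := (Finset.mem_filter.mp hvI).2
          have hjw : j ∈ c w := (Finset.mem_filter.mp hwI).2
          exact Finset.disjoint_left.mp (hc.2 v w hadj) hjv hjw
        · simp only [hvI, hwI, ite_true, ite_false]
          exact fun h => absurd h.symm (Nat.ne_of_lt (hf1 w (Finset.mem_sdiff.mpr ⟨hw, hwI⟩)))
        · simp only [hvI, hwI, ite_true, ite_false]
          exact Nat.ne_of_lt (hf1 v (Finset.mem_sdiff.mpr ⟨hv, hvI⟩))
        · simp only [hvI, hwI, ite_false]
          exact hf2 v (Finset.mem_sdiff.mpr ⟨hv, hvI⟩) w (Finset.mem_sdiff.mpr ⟨hw, hwI⟩) hadj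
      · have hcard : s'.card = s.card - I.card := Finset.card_sdiff_of_subset hIs
        have hIle : I.card ≤ s.card := Finset.card_le_card hIs
        have hstep : (s'.card : ℝ) ≤ (s.card : ℝ) - (s.card : ℝ) / ((A:ℝ)/(B:ℝ)) := by
          have h1 : (s'.card : ℝ) = (s.card : ℝ) - (I.card : ℝ) := by
            rw [hcard]
            push_cast [hIle]
            ring
          have h2 : (s.card : ℝ) / ((A:ℝ)/(B:ℝ)) ≤ (I.card : ℝ) := by
            rw [div_div_eq_mul_div, div_le_iff₀ hA0]
            have : (B:ℝ) * (s.card:ℝ) ≤ (A:ℝ) * (I.card:ℝ) := by exact_mod_cast hBm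
            nlinarith
          linarith
        have := Bfun_step hk hm hstep
        push_cast
        linarith
end Greedy

section Master
variable {W : Type*} [Fintype W] (H : SimpleGraph W)

lemma master {A B M : ℕ} (hB : 1 ≤ B) (hM : 1 ≤ M)
    (hex : HasFoldColoring H A B)
    (hind : ∀ s : Finset W, (∀ v ∈ s, ∀ w ∈ s, H.Adj v w → False) → s.card ≤ M) :
    (foldChromatic H 1 : ℝ) ≤ (A : ℝ)/(B : ℝ) * (1 + Real.log M) := by
  classical
  obtain ⟨c, hc⟩ := hex
  by_cases hW : Nonempty W
  · have hBA : B ≤ A := by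
      obtain ⟨v⟩ := hW
      calc B = (c v).card := (hc.1 v).symm
      _ ≤ Fintype.card (Fin A) := Finset.card_le_univ _
      _ = A := Fintype.card_fin A
    have hB0 : (0:ℝ) < (B:ℝ) := by exact_mod_cast hB
    have hk : (1:ℝ) ≤ (A:ℝ)/(B:ℝ) := by
      rw [le_div_iff₀ hB0, one_mul]; exact_mod_cast hBA
    obtain ⟨t, f, hf1, hf2, hf3⟩ := greedy H hB c hc Finset.univ
    -- foldChromatic H 1 ≤ t
    have hfold : foldChromatic H 1 ≤ t := by
      apply Nat.sInf_le
      refine ⟨fun v => {⟨f v, hf1 v (Finset.mem_univ v)⟩}, fun v => Finset.card_singleton _, ?_⟩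
      intro v w hadj
      rw [Finset.disjoint_singleton]
      intro hcon
      exact hf2 v (Finset.mem_univ v) w (Finset.mem_univ w) hadj (by
        have := congrArg Fin.val hcon
        simpa using this)
    -- N ≤ k * M
    have hNM : (Fintype.card W : ℝ) ≤ (A:ℝ)/(B:ℝ) * (M:ℝ) := by
      have hsum : B * (Finset.univ : Finset W).card ≤ A * M := by
        rw [← sum_classes c hc.1 Finset.univ]
        calc ∑ j : Fin A, ((Finset.univ : Finset W).filter (fun v => j ∈ c v)).card
            ≤ (Finset.univ : Finset (Fin A)).card • M := by
              apply Finset.sum_le_card_nsmul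
              intro j _
              apply hind
              intro v hv w hw hadj
              have hjv : j ∈ c v := (Finset.mem_filter.mp hv).2
              have hjw : j ∈ c w := (Finset.mem_filter.mp hw).2
              exact Finset.disjoint_left.mp (hc.2 v w hadj) hjv hjw
        _ = A * M := by rw [smul_eq_mul, Finset.card_univ, Fintype.card_fin]
      have : (B:ℝ) * (Fintype.card W : ℝ) ≤ (A:ℝ) * (M:ℝ) := by
        rw [← Finset.card_univ]
        exact_mod_cast hsum
      rw [div_mul_eq_mul_div, le_div_iff₀ hB0]
      nlinarith
    have hend : (t : ℝ) ≤ (A:ℝ)/(B:ℝ) * (1 + Real.log M) := by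
      calc (t:ℝ) ≤ Bfun ((A:ℝ)/(B:ℝ)) (Finset.univ : Finset W).card := hf3
      _ ≤ (A:ℝ)/(B:ℝ) * (1 + Real.log M) := by
          rw [Finset.card_univ]
          exact Bfun_le hk (by exact_mod_cast hM) (by positivity) hNM
    exact le_trans (by exact_mod_cast hfold) hend
  · -- W empty
    have h0 : foldChromatic H 1 = 0 := by
      have : HasFoldColoring H 0 1 :=
        ⟨fun v => absurd ⟨v⟩ hW, fun v => absurd ⟨v⟩ hW, fun v => absurd ⟨v⟩ hW⟩
      exact Nat.le_zero.mp (Nat.sInf_le this)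
    rw [h0, Nat.cast_zero]
    have : (0:ℝ) ≤ Real.log M := Real.log_nonneg (by exact_mod_cast hM)
    positivity
end Master

section Pieces
variable {V : Type*}

/-- a `b`-fold coloring of `G` yields a `b^n`-fold coloring of `orPow G n`. -/
lemma orPow_fold (G : SimpleGraph V) (n a b : ℕ) (h : HasFoldColoring G a b) :
    HasFoldColoring (orPow G n) (a ^ n) (b ^ n) := by
  classical
  obtain ⟨c, hc1, hc2⟩ := h
  have hcard : Fintype.card (Fin n → Fin a) = a ^ n := by simp
  let e : (Fin n → Fin a) ≃ Fin (a ^ n) := Fintype.equivFinOfCardEq hcard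
  refine ⟨fun x => (Fintype.piFinset fun i => c (x i)).map e.toEmbedding, ?_, ?_⟩
  · intro x
    rw [Finset.card_map, Fintype.card_piFinset]
    simp [hc1]
  · rintro x y ⟨i, hi⟩
    rw [Finset.disjoint_map]
    rw [Finset.disjoint_left]
    intro g hgx hgy
    have h1 : g i ∈ c (x i) := Fintype.mem_piFinset.mp hgx i
    have h2 : g i ∈ c (y i) := Fintype.mem_piFinset.mp hgy i
    exact Finset.disjoint_left.mp (hc2 _ _ hi) h1 h2

/-- a fold coloring attaining `foldChromatic` exists. -/
lemma exists_fold [Fintype V] (G : SimpleGraph V) (b : ℕ) :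
    HasFoldColoring G (foldChromatic G b) b := by
  classical
  have hne : {a | HasFoldColoring G a b}.Nonempty := by
    refine ⟨b * Fintype.card V, ?_⟩
    let e := Fintype.equivFin V
    refine ⟨fun v => Finset.univ.map ⟨fun t : Fin b => finProdFinEquiv (t, e v), ?_⟩, ?_, ?_⟩
    · intro t s hts
      have := finProdFinEquiv.injective hts
      exact (Prod.mk.injEq _ _ _ _).mp this |>.1
    · intro v
      rw [Finset.card_map, Finset.card_univ, Fintype.card_fin]
    · intro v w hadj
      rw [Finset.disjoint_left]
      rintro x hx hy
      simp only [Finset.mem_map, Finset.mem_univ, true_and, Function.Embedding.coeFn_mk] at hx hy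
      obtain ⟨t, ht⟩ := hx
      obtain ⟨s, hs⟩ := hy
      have : (t, e v) = (s, e w) := finProdFinEquiv.injective (ht.trans hs.symm)
      have hvw : e v = e w := ((Prod.mk.injEq _ _ _ _).mp this).2
      exact G.ne_of_adj hadj (e.injective hvw)
  exact Nat.sInf_mem hne

lemma card_le_indepNum [Fintype V] (G : SimpleGraph V) (s : Finset V)
    (h : ∀ v ∈ s, ∀ w ∈ s, v ≠ w → ¬ G.Adj v w) : s.card ≤ indepNum G := by
  apply le_csSup
  · refine ⟨Fintype.card V, ?_⟩
    rintro m ⟨t, _, rfl⟩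
    exact Finset.card_le_univ t
  · exact ⟨s, h, rfl⟩

lemma orPow_indep_bound [Fintype V] (G : SimpleGraph V) (n : ℕ)
    (S : Finset (Fin n → V))
    (hS : ∀ x ∈ S, ∀ y ∈ S, (orPow G n).Adj x y → False) :
    S.card ≤ (indepNum G) ^ n := by
  classical
  have hsub : S ⊆ Fintype.piFinset (fun i => S.image (fun x => x i)) := by
    intro x hx
    rw [Fintype.mem_piFinset]
    intro i
    exact Finset.mem_image_of_mem _ hx
  calc S.card ≤ (Fintype.piFinset (fun i => S.image (fun x => x i))).card :=
        Finset.card_le_card hsub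
  _ = ∏ i : Fin n, (S.image (fun x => x i)).card := Fintype.card_piFinset _
  _ ≤ ∏ i : Fin n, indepNum G := by
      apply Finset.prod_le_prod (fun _ _ => Nat.zero_le _)
      intro i _
      apply card_le_indepNum
      intro u hu w hw huw
      obtain ⟨x, hx, rfl⟩ := Finset.mem_image.mp hu
      obtain ⟨y, hy, rfl⟩ := Finset.mem_image.mp hw
      intro hadj
      exact hS x hx y hy ⟨i, hadj⟩
  _ = (indepNum G) ^ n := by rw [Finset.prod_const, Finset.card_univ, Fintype.card_fin]
end Pieces


end LovaszAux

/-- Lovász's bound: `χ(G^n) ≤ χ_f(G)^n · (1 + n·ln α(G))` when `α(G) ≥ 2`. -/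
theorem chromatic_orPow_le_lovasz {V : Type*} [Fintype V]
    (G : SimpleGraph V) (n : ℕ) (hn : 1 ≤ n) (hα : 2 ≤ indepNum G) :
    (foldChromatic (orPow G n) 1 : ℝ) ≤
      fracChromatic G ^ n * (1 + (n : ℝ) * Real.log (indepNum G)) := by
  classical
  have hα1 : 1 ≤ indepNum G := le_trans (by norm_num) hα
  have hαR : (1:ℝ) ≤ (indepNum G : ℝ) := by exact_mod_cast hα1
  have hM : 1 ≤ (indepNum G) ^ n := Nat.one_le_pow _ _ (by omega)
  set C : ℝ := 1 + (n : ℝ) * Real.log (indepNum G) with hCdef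
  have hlog : (0:ℝ) ≤ Real.log (indepNum G) := Real.log_nonneg hαR
  have hC : 0 < C := by
    have : (0:ℝ) ≤ (n:ℝ) * Real.log (indepNum G) := by positivity
    linarith
  have hn0 : (n:ℝ) ≠ 0 := by
    have : n ≠ 0 := by omega
    exact_mod_cast this
  set χ : ℝ := (foldChromatic (orPow G n) 1 : ℝ) with hχ
  have hχ0 : 0 ≤ χ := Nat.cast_nonneg _
  have key : ∀ b : ℕ+, χ ≤ ((foldChromatic G (b:ℕ) : ℝ) / ((b:ℕ):ℝ)) ^ n * C := by
    intro b
    have h1 : HasFoldColoring (orPow G n) ((foldChromatic G (b:ℕ)) ^ n) ((b:ℕ) ^ n) :=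
      orPow_fold G n _ _ (exists_fold G (b:ℕ))
    have h2 := master (orPow G n) (A := (foldChromatic G (b:ℕ)) ^ n) (B := (b:ℕ) ^ n)
      (M := (indepNum G) ^ n)
      (Nat.one_le_pow _ _ b.pos) hM h1 (orPow_indep_bound G n)
    calc χ ≤ ((((foldChromatic G (b:ℕ)) ^ n : ℕ)) : ℝ) / (((b:ℕ) ^ n : ℕ) : ℝ)
          * (1 + Real.log (((indepNum G) ^ n : ℕ) : ℝ)) := h2
    _ = ((foldChromatic G (b:ℕ) : ℝ) / ((b:ℕ):ℝ)) ^ n * C := by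
        push_cast
        rw [Real.log_pow, div_pow]
  -- rpow trick
  set r : ℝ := (χ / C) ^ ((n:ℝ)⁻¹) with hr
  have hr0 : 0 ≤ r := Real.rpow_nonneg (by positivity) _
  have hrle : ∀ b : ℕ+, r ≤ (foldChromatic G (b:ℕ) : ℝ) / ((b:ℕ):ℝ) := by
    intro b
    set q : ℝ := (foldChromatic G (b:ℕ) : ℝ) / ((b:ℕ):ℝ) with hq
    have hq0 : 0 ≤ q := by positivity
    have h3 : χ / C ≤ q ^ n := by
      rw [div_le_iff₀ hC]
      exact key b
    calc r ≤ (q ^ n) ^ ((n:ℝ)⁻¹) :=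
          Real.rpow_le_rpow (by positivity) h3 (by positivity)
    _ = q := by
        rw [← Real.rpow_natCast q n, ← Real.rpow_mul hq0, mul_inv_cancel₀ hn0, Real.rpow_one]
  have hfr : r ≤ fracChromatic G := le_ciInf hrle
  have hrn : r ^ n = χ / C := by
    rw [hr, ← Real.rpow_natCast ((χ/C) ^ ((n:ℝ)⁻¹)) n, ← Real.rpow_mul (by positivity),
      inv_mul_cancel₀ hn0, Real.rpow_one]
  have : χ / C ≤ fracChromatic G ^ n := by
    rw [← hrn]
    exact pow_le_pow_left₀ hr0 hfr n
  calc χ = χ / C * C := by field_simp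
  _ ≤ fracChromatic G ^ n * C := mul_le_mul_of_nonneg_right this hC.le
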